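/- In the group algebra of S_4, with numberings of shape (3,1) denoted by their fillings, the four elements satisfy the relation v_{[[1,2,3],[4]]}^{Y} + v_{[[1,2,4],[3]]}^{Y} + v_{[[1,3,4],[2]]}^{Y} + v_{[[2,3,4],[1]]}^{Y} = 0, for any fixed numbering Y of shape (3,1). -/

import Mathlib

open Equiv MonoidAlgebra
open scoped Classical

/-- A *numbering* of shape `μ ⊢ n`: a bijective filling of the cells of the Young diagram `μ`
with the entries `Fin n` (representing `1, …, n`). -/
abbrev YNumbering (μ : YoungDiagram) (n : ℕ) := ↥μ.cells ≃ Fin n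

namespace YNumbering

variable {μ : YoungDiagram} {n : ℕ}

/-- The action of `π ∈ S_n` on numberings: `(π • T) c = π (T c)`. -/
def perm (π : Equiv.Perm (Fin n)) (T : YNumbering μ n) : YNumbering μ n := T.trans π

/-- The row index of the cell of `T` containing the entry `i`. -/
def rowFn (T : YNumbering μ n) (i : Fin n) : ℕ := ((T.symm i : ℕ × ℕ)).1

/-- The column index of the cell of `T` containing the entry `i`. -/
def colFn (T : YNumbering μ n) (i : Fin n) : ℕ := ((T.symm i : ℕ × ℕ)).2

/-- The row group `R(T)`: permutations permuting the entries within each row of `T`. -/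
def rowGroup (T : YNumbering μ n) : Subgroup (Equiv.Perm (Fin n)) where
  carrier := {π | ∀ i, T.rowFn (π i) = T.rowFn i}
  one_mem' := fun _ => rfl
  mul_mem' := by
    intro a b ha hb i
    rw [Equiv.Perm.mul_apply, ha, hb]
  inv_mem' := by
    intro a ha i
    have h := ha (a⁻¹ i)
    rw [Equiv.Perm.inv_def, Equiv.apply_symm_apply] at h
    exact h.symm

/-- The column group `C(T)`: permutations permuting the entries within each column of `T`. -/
def colGroup (T : YNumbering μ n) : Subgroup (Equiv.Perm (Fin n)) where
  carrier := {π | ∀ i, T.colFn (π i) = T.colFn i}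
  one_mem' := fun _ => rfl
  mul_mem' := by
    intro a b ha hb i
    rw [Equiv.Perm.mul_apply, ha, hb]
  inv_mem' := by
    intro a ha i
    have h := ha (a⁻¹ i)
    rw [Equiv.Perm.inv_def, Equiv.apply_symm_apply] at h
    exact h.symm

/-- The Young symmetrizer `a_T = Σ_{ρ ∈ R(T)} ρ` in the group algebra `R[S_n]`. -/
noncomputable def aElt (R : Type*) [CommRing R] (T : YNumbering μ n) :
    MonoidAlgebra R (Equiv.Perm (Fin n)) :=
  ∑ ρ : T.rowGroup, MonoidAlgebra.single (ρ : Equiv.Perm (Fin n)) (1 : R)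

/-- The Young symmetrizer `b_T = Σ_{ζ ∈ C(T)} sgn(ζ)·ζ` in the group algebra `R[S_n]`. -/
noncomputable def bElt (R : Type*) [CommRing R] (T : YNumbering μ n) :
    MonoidAlgebra R (Equiv.Perm (Fin n)) :=
  ∑ ζ : T.colGroup, MonoidAlgebra.single (ζ : Equiv.Perm (Fin n))
    (((Equiv.Perm.sign (ζ : Equiv.Perm (Fin n)) : ℤ) : R))

/-- The Young symmetrizer `c_T = b_T · a_T`. -/
noncomputable def cElt (R : Type*) [CommRing R] (T : YNumbering μ n) :
    MonoidAlgebra R (Equiv.Perm (Fin n)) :=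
  bElt R T * aElt R T

/-- `σ_{T,S}` : the unique permutation with `σ_{T,S} · T = S`. -/
def sigmaPerm (T S : YNumbering μ n) : Equiv.Perm (Fin n) := T.symm.trans S

/-- `v_T^S = σ_{T,S} · b_T · a_T` in the group algebra. -/
noncomputable def vElt (R : Type*) [CommRing R] (T S : YNumbering μ n) :
    MonoidAlgebra R (Equiv.Perm (Fin n)) :=
  MonoidAlgebra.single (sigmaPerm T S) (1 : R) * cElt R T

end YNumbering

/-- The Young diagram of shape `(3,1)`. -/
def mu31 : YoungDiagram := YoungDiagram.ofRowLens [3, 1] (by decide)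

namespace StraighteningAux
open Equiv Finset YNumbering

lemma fin4_forall {P : Fin 4 → Prop} (h0 : P 0) (h1 : P 1) (h2 : P 2) (h3 : P 3) :
    ∀ i, P i := by
  intro i
  fin_cases i
  exacts [h0, h1, h2, h3]

def G (σ : Perm (Fin 4)) (cf rf : Fin 4 → ℕ) (g : Perm (Fin 4)) : ℤ :=
  ∑ ζ ∈ univ.filter (fun π : Perm (Fin 4) => ∀ i, cf (π i) = cf i),
    ∑ ρ ∈ univ.filter (fun π : Perm (Fin 4) => ∀ i, rf (π i) = rf i),
      (if σ * ζ * ρ = g then ((Perm.sign ζ : ℤ)) else 0)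

noncomputable def F (σ : Perm (Fin 4)) (cf rf : Fin 4 → ℕ) :
    MonoidAlgebra ℤ (Perm (Fin 4)) :=
  ∑ ζ ∈ univ.filter (fun π : Perm (Fin 4) => ∀ i, cf (π i) = cf i),
    ∑ ρ ∈ univ.filter (fun π : Perm (Fin 4) => ∀ i, rf (π i) = rf i),
      MonoidAlgebra.single (σ * ζ * ρ) ((Perm.sign ζ : ℤ))

lemma F_apply (σ : Perm (Fin 4)) (cf rf : Fin 4 → ℕ) (g : Perm (Fin 4)) :
    (F σ cf rf).coeff g = G σ cf rf g := by
  rw [F, G, MonoidAlgebra.coeff_sum, Finsupp.finset_sum_apply]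
  refine Finset.sum_congr rfl fun ζ _ => ?_
  rw [MonoidAlgebra.coeff_sum, Finsupp.finset_sum_apply]
  refine Finset.sum_congr rfl fun ρ _ => ?_
  rw [MonoidAlgebra.coeff_single, Finsupp.single_apply]

def σB : Perm (Fin 4) := Equiv.swap 2 3
def σC : Perm (Fin 4) := Equiv.swap 1 3 * Equiv.swap 2 3
def σD : Perm (Fin 4) := Equiv.swap 0 3 * Equiv.swap 3 2 * Equiv.swap 2 1

theorem comp : ∀ g : Perm (Fin 4),
    G 1 ![0,1,2,0] ![0,0,0,1] g + G σB ![0,1,0,2] ![0,0,1,0] g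
      + G σC ![0,0,1,2] ![0,1,0,0] g + G σD ![0,0,1,2] ![1,0,0,0] g = 0 := by
  decide

theorem Fsum_eq_zero :
    F 1 ![0,1,2,0] ![0,0,0,1] + F σB ![0,1,0,2] ![0,0,1,0]
      + F σC ![0,0,1,2] ![0,1,0,0] + F σD ![0,0,1,2] ![1,0,0,0] = 0 := by
  refine MonoidAlgebra.coeff_injective (Finsupp.ext fun g => ?_)
  rw [MonoidAlgebra.coeff_add, MonoidAlgebra.coeff_add, MonoidAlgebra.coeff_add,
    Finsupp.add_apply, Finsupp.add_apply, Finsupp.add_apply, F_apply, F_apply, F_apply,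
    F_apply, MonoidAlgebra.coeff_zero, Finsupp.coe_zero, Pi.zero_apply]
  exact comp g

lemma mem_rowGroup_iff (T : YNumbering mu31 4) (π : Perm (Fin 4)) :
    π ∈ T.rowGroup ↔ ∀ i, T.rowFn (π i) = T.rowFn i := Iff.rfl

lemma mem_colGroup_iff (T : YNumbering mu31 4) (π : Perm (Fin 4)) :
    π ∈ T.colGroup ↔ ∀ i, T.colFn (π i) = T.colFn i := Iff.rfl

lemma aElt_eq (T : YNumbering mu31 4) (rf : Fin 4 → ℕ) (hr : ∀ i, T.rowFn i = rf i) :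
    aElt ℤ T = ∑ ρ ∈ univ.filter (fun π : Perm (Fin 4) => ∀ i, rf (π i) = rf i),
      MonoidAlgebra.single ρ (1 : ℤ) := by
  rw [aElt]
  refine Eq.symm (Finset.sum_subtype _ ?_ (fun ρ => MonoidAlgebra.single ρ (1 : ℤ)))
  intro x
  simp only [Finset.mem_filter, Finset.mem_univ, true_and, mem_rowGroup_iff, hr]

lemma bElt_eq (T : YNumbering mu31 4) (cf : Fin 4 → ℕ) (hc : ∀ i, T.colFn i = cf i) :
    bElt ℤ T = ∑ ζ ∈ univ.filter (fun π : Perm (Fin 4) => ∀ i, cf (π i) = cf i),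
      MonoidAlgebra.single ζ ((Perm.sign ζ : ℤ)) := by
  rw [bElt]
  refine Eq.symm (Finset.sum_subtype _ ?_ (fun ζ => MonoidAlgebra.single ζ ((Perm.sign ζ : ℤ))))
  intro x
  simp only [Finset.mem_filter, Finset.mem_univ, true_and, mem_colGroup_iff, hc]

lemma vElt_eq_F (T S : YNumbering mu31 4) (σ : Perm (Fin 4)) (cf rf : Fin 4 → ℕ)
    (hσ : ∀ i, S (T.symm i) = σ i) (hc : ∀ i, T.colFn i = cf i)
    (hr : ∀ i, T.rowFn i = rf i) :
    vElt ℤ T S = F σ cf rf := by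
  have hσ' : sigmaPerm T S = σ := Equiv.ext hσ
  rw [vElt, cElt, hσ', aElt_eq T rf hr, bElt_eq T cf hc, F, Finset.sum_mul_sum,
    Finset.mul_sum]
  refine Finset.sum_congr rfl fun ζ _ => ?_
  rw [Finset.mul_sum]
  refine Finset.sum_congr rfl fun ρ _ => ?_
  rw [MonoidAlgebra.single_mul_single, MonoidAlgebra.single_mul_single, one_mul, mul_one,
    mul_assoc]

lemma vElt_shift (T S Y : YNumbering mu31 4) :
    vElt ℤ T Y = MonoidAlgebra.single (sigmaPerm S Y) (1 : ℤ) * vElt ℤ T S := by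
  have h : sigmaPerm S Y * sigmaPerm T S = sigmaPerm T Y := by
    ext i
    simp [sigmaPerm, Equiv.Perm.mul_apply]
  rw [vElt, vElt, ← mul_assoc, MonoidAlgebra.single_mul_single, one_mul, h]

end StraighteningAux

/-- In `ℤ[S_4]`, with numberings of shape `(3,1)` denoted by their fillings
(entries `1,2,3,4` encoded as `0,1,2,3 : Fin 4`), the relation
`v_{[[1,2,3],[4]]}^Y + v_{[[1,2,4],[3]]}^Y + v_{[[1,3,4],[2]]}^Y + v_{[[2,3,4],[1]]}^Y = 0`
holds for any numbering `Y` of shape `(3,1)`. -/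
theorem straightening_sum_shape_three_one
    (A B C D Y : YNumbering mu31 4)
    (h00 : ((0, 0) : ℕ × ℕ) ∈ mu31.cells) (h01 : ((0, 1) : ℕ × ℕ) ∈ mu31.cells)
    (h02 : ((0, 2) : ℕ × ℕ) ∈ mu31.cells) (h10 : ((1, 0) : ℕ × ℕ) ∈ mu31.cells)
    (hA : A ⟨(0, 0), h00⟩ = 0 ∧ A ⟨(0, 1), h01⟩ = 1 ∧ A ⟨(0, 2), h02⟩ = 2 ∧ A ⟨(1, 0), h10⟩ = 3)
    (hB : B ⟨(0, 0), h00⟩ = 0 ∧ B ⟨(0, 1), h01⟩ = 1 ∧ B ⟨(0, 2), h02⟩ = 3 ∧ B ⟨(1, 0), h10⟩ = 2)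
    (hC : C ⟨(0, 0), h00⟩ = 0 ∧ C ⟨(0, 1), h01⟩ = 2 ∧ C ⟨(0, 2), h02⟩ = 3 ∧ C ⟨(1, 0), h10⟩ = 1)
    (hD : D ⟨(0, 0), h00⟩ = 1 ∧ D ⟨(0, 1), h01⟩ = 2 ∧ D ⟨(0, 2), h02⟩ = 3 ∧ D ⟨(1, 0), h10⟩ = 0) :
    YNumbering.vElt ℤ A Y + YNumbering.vElt ℤ B Y + YNumbering.vElt ℤ C Y +
      YNumbering.vElt ℤ D Y = 0 := by
  obtain ⟨hA1, hA2, hA3, hA4⟩ := hA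
  obtain ⟨hB1, hB2, hB3, hB4⟩ := hB
  obtain ⟨hC1, hC2, hC3, hC4⟩ := hC
  obtain ⟨hD1, hD2, hD3, hD4⟩ := hD
  have sA0 : A.symm 0 = ⟨(0,0), h00⟩ := by rw [Equiv.symm_apply_eq]; exact hA1.symm
  have sA1 : A.symm 1 = ⟨(0,1), h01⟩ := by rw [Equiv.symm_apply_eq]; exact hA2.symm
  have sA2 : A.symm 2 = ⟨(0,2), h02⟩ := by rw [Equiv.symm_apply_eq]; exact hA3.symm
  have sA3 : A.symm 3 = ⟨(1,0), h10⟩ := by rw [Equiv.symm_apply_eq]; exact hA4.symm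
  have sB0 : B.symm 0 = ⟨(0,0), h00⟩ := by rw [Equiv.symm_apply_eq]; exact hB1.symm
  have sB1 : B.symm 1 = ⟨(0,1), h01⟩ := by rw [Equiv.symm_apply_eq]; exact hB2.symm
  have sB2 : B.symm 2 = ⟨(1,0), h10⟩ := by rw [Equiv.symm_apply_eq]; exact hB4.symm
  have sB3 : B.symm 3 = ⟨(0,2), h02⟩ := by rw [Equiv.symm_apply_eq]; exact hB3.symm
  have sC0 : C.symm 0 = ⟨(0,0), h00⟩ := by rw [Equiv.symm_apply_eq]; exact hC1.symm
  have sC1 : C.symm 1 = ⟨(1,0), h10⟩ := by rw [Equiv.symm_apply_eq]; exact hC4.symm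
  have sC2 : C.symm 2 = ⟨(0,1), h01⟩ := by rw [Equiv.symm_apply_eq]; exact hC2.symm
  have sC3 : C.symm 3 = ⟨(0,2), h02⟩ := by rw [Equiv.symm_apply_eq]; exact hC3.symm
  have sD0 : D.symm 0 = ⟨(1,0), h10⟩ := by rw [Equiv.symm_apply_eq]; exact hD4.symm
  have sD1 : D.symm 1 = ⟨(0,0), h00⟩ := by rw [Equiv.symm_apply_eq]; exact hD1.symm
  have sD2 : D.symm 2 = ⟨(0,1), h01⟩ := by rw [Equiv.symm_apply_eq]; exact hD2.symm
  have sD3 : D.symm 3 = ⟨(0,2), h02⟩ := by rw [Equiv.symm_apply_eq]; exact hD3.symm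
  have hFA : YNumbering.vElt ℤ A A = StraighteningAux.F 1 ![0,1,2,0] ![0,0,0,1] := by
    refine StraighteningAux.vElt_eq_F A A 1 _ _
      (StraighteningAux.fin4_forall ?_ ?_ ?_ ?_) (StraighteningAux.fin4_forall ?_ ?_ ?_ ?_)
      (StraighteningAux.fin4_forall ?_ ?_ ?_ ?_) <;>
    simp [YNumbering.colFn, YNumbering.rowFn, sA0, sA1, sA2, sA3, hA1, hA2, hA3, hA4, -Prod.mk_zero_zero]
  have hFB : YNumbering.vElt ℤ B A =
      StraighteningAux.F StraighteningAux.σB ![0,1,0,2] ![0,0,1,0] := by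
    refine StraighteningAux.vElt_eq_F B A _ _ _
      (StraighteningAux.fin4_forall ?_ ?_ ?_ ?_) (StraighteningAux.fin4_forall ?_ ?_ ?_ ?_)
      (StraighteningAux.fin4_forall ?_ ?_ ?_ ?_) <;>
    simp [YNumbering.colFn, YNumbering.rowFn, sB0, sB1, sB2, sB3, hA1, hA2, hA3, hA4,
      StraighteningAux.σB, Equiv.swap_apply_def, -Prod.mk_zero_zero]
  have hFC : YNumbering.vElt ℤ C A =
      StraighteningAux.F StraighteningAux.σC ![0,0,1,2] ![0,1,0,0] := by
    refine StraighteningAux.vElt_eq_F C A _ _ _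
      (StraighteningAux.fin4_forall ?_ ?_ ?_ ?_) (StraighteningAux.fin4_forall ?_ ?_ ?_ ?_)
      (StraighteningAux.fin4_forall ?_ ?_ ?_ ?_) <;>
    simp [YNumbering.colFn, YNumbering.rowFn, sC0, sC1, sC2, sC3, hA1, hA2, hA3, hA4,
      StraighteningAux.σC, Equiv.swap_apply_def, -Prod.mk_zero_zero]
  have hFD : YNumbering.vElt ℤ D A =
      StraighteningAux.F StraighteningAux.σD ![0,0,1,2] ![1,0,0,0] := by
    refine StraighteningAux.vElt_eq_F D A _ _ _
      (StraighteningAux.fin4_forall ?_ ?_ ?_ ?_) (StraighteningAux.fin4_forall ?_ ?_ ?_ ?_)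
      (StraighteningAux.fin4_forall ?_ ?_ ?_ ?_) <;>
    simp [YNumbering.colFn, YNumbering.rowFn, sD0, sD1, sD2, sD3, hA1, hA2, hA3, hA4,
      StraighteningAux.σD, Equiv.swap_apply_def, -Prod.mk_zero_zero]
  rw [StraighteningAux.vElt_shift A A Y, StraighteningAux.vElt_shift B A Y,
    StraighteningAux.vElt_shift C A Y, StraighteningAux.vElt_shift D A Y,
    ← mul_add, ← mul_add, ← mul_add, hFA, hFB, hFC, hFD,
    StraighteningAux.Fsum_eq_zero, mul_zero]
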